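/- arXiv:0802.1565 — 3 statements merged into one kernel-verified Lean document; each statement's English description precedes it below -/
import Mathlib

section
/- For any integer k ≥ 3, the double zeta value satisfies Euler's formula: 2·ζ(k-1,1) = (k-1)·ζ(k) - Σ_{j=2}^{k-2} ζ(j)·ζ(k-j). -/
/-- Riemann zeta value ζ(j) = ∑_{m≥1} 1/m^j. -/
noncomputable def rz (j : ℕ) : ℝ := ∑' n : ℕ, 1 / ((n : ℝ) + 1) ^ j

/-- Double zeta value ζ(q,p) = ∑_{n>m>0} 1/(n^q m^p). -/
noncomputable def dz (q p : ℕ) : ℝ :=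
  ∑' x : ℕ × ℕ, 1 / (((x.1 : ℝ) + (x.2 : ℝ) + 2) ^ q * ((x.2 : ℝ) + 1) ^ p)

/-- Tornheim double series T(r,q,p) = ∑_{n,m>0} 1/((n+m)^r n^q m^p). -/
noncomputable def T (r q p : ℕ) : ℝ :=
  ∑' x : ℕ × ℕ,
    1 / (((x.1 : ℝ) + (x.2 : ℝ) + 2) ^ r * ((x.1 : ℝ) + 1) ^ q * ((x.2 : ℝ) + 1) ^ p)

/-!
The harmonic product `ζ(a)ζ(b) = ζ(a,b) + ζ(b,a) + ζ(a+b)` comes from splitting `∑_{n,m}` into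
`n > m`, `n < m` and `n = m`. The sum formula `∑_{j=2}^{k-1} ζ(j,k-j) = ζ(k)` comes from the
Tornheim series `T(r,q,p) = ∑_{n,m ≥ 1} 1/((n+m)^r n^q m^p)`: the partial fraction
`1/(nm) = (1/n + 1/m)/(n+m)` gives `T(r,q+1,p+1) = T(r+1,q,p+1) + T(r+1,q+1,p)`, which telescopes
`T(1,1,k-2)` into `∑_{j=2}^{k-1} ζ(j,k-j)`, while summing `T(1,1,k-2)` over `n` first turns it
into `∑_m H_m / m^{k-1} = ζ(k-1,1) + ζ(k)`. Adding the harmonic products for `2 ≤ j ≤ k-2` and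
using the symmetry `j ↔ k-j`, the sum formula leaves only `ζ(k-1,1)`.
-/

open Finset Filter Topology Function

theorem HasSum.add_of_isCompl_range {α β γ δ : Type*} [AddCommMonoid α] [TopologicalSpace α]
    [ContinuousAdd α] {f : β → α} {φ : γ → β} {ψ : δ → β} {a b : α} (hφ : Injective φ)
    (hψ : Injective ψ) (h : IsCompl (Set.range φ) (Set.range ψ)) (ha : HasSum (f ∘ φ) a)
    (hb : HasSum (f ∘ ψ) b) : HasSum f (a + b) :=
  HasSum.add_isCompl h (hφ.hasSum_range_iff.2 ha) (hψ.hasSum_range_iff.2 hb)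

theorem HasSum.sum_antidiagonal {α : Type*} [AddCommMonoid α] [TopologicalSpace α]
    [ContinuousAdd α] [RegularSpace α] {f : ℕ × ℕ → α} {a : α} (hf : HasSum f a) :
    HasSum (fun n => ∑ x ∈ antidiagonal n, f x) a :=
  HasSum.sigma (HasAntidiagonal.sigmaAntidiagonalEquivProd.hasSum_iff.2 hf) fun n =>
    (sum_coe_sort (antidiagonal n) f) ▸ hasSum_fintype _

lemma hasSum_sub_add_of_antitone {f : ℕ → ℝ} (hf : Antitone f) (h0 : Tendsto f atTop (𝓝 0))
    (m : ℕ) : HasSum (fun n => f n - f (n + m)) (∑ i ∈ range m, f i) := by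
  refine (hasSum_iff_tendsto_nat_of_nonneg (fun n => sub_nonneg.2 (hf (by omega))) _).2 ?_
  have partial_sum (N : ℕ) : ∑ n ∈ range N, (f n - f (n + m))
      = ∑ i ∈ range m, f i - ∑ i ∈ range m, f (N + i) := by
    -- both sides regroup `∑_{n < N + m} f n`
    have := (sum_range_add f N m).symm.trans (add_comm N m ▸ sum_range_add f m N)
    simp only [sum_sub_distrib, add_comm _ m]
    linarith
  simp only [partial_sum]
  simpa using tendsto_const_nhds.sub
    (tendsto_finsetSum (range m) fun i _ => h0.comp (tendsto_add_atTop_nat i))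

lemma hasSum_one_div_add_one_sub (m : ℕ) :
    HasSum (fun n : ℕ => 1 / ((n : ℝ) + 1) - 1 / ((n : ℝ) + m + 1))
      (∑ i ∈ range m, 1 / ((i : ℝ) + 1)) := by
  have hf : Antitone fun n : ℕ => 1 / ((n : ℝ) + 1) := fun _ _ => Nat.one_div_le_one_div
  simpa [add_right_comm] using
    hasSum_sub_add_of_antitone hf tendsto_one_div_add_atTop_nhds_zero_nat m

lemma isCompl_range_ge_range_lt :
    IsCompl (Set.range fun x : ℕ × ℕ => (x.1 + x.2, x.2))
      (Set.range fun x : ℕ × ℕ => (x.2, x.1 + x.2 + 1)) := by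
  rw [isCompl_iff, Set.disjoint_left, codisjoint_iff_le_sup]
  refine ⟨?_, fun ⟨a, b⟩ _ => ?_⟩
  · rintro _ ⟨x, rfl⟩ ⟨y, hy⟩
    simp only [Prod.ext_iff] at hy
    omega
  · rcases le_or_gt b a with h | h
    · exact Or.inl ⟨(a - b, b), Prod.ext (Nat.sub_add_cancel h) rfl⟩
    · exact Or.inr ⟨(b - a - 1, a), Prod.ext rfl (by dsimp only; omega)⟩

lemma isCompl_range_zero_range_succ :
    IsCompl (Set.range fun n : ℕ => ((0 : ℕ), n))
      (Set.range fun x : ℕ × ℕ => (x.1 + 1, x.2)) := by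
  rw [isCompl_iff, Set.disjoint_left, codisjoint_iff_le_sup]
  refine ⟨?_, fun ⟨a, b⟩ _ => ?_⟩
  · rintro _ ⟨n, rfl⟩ ⟨y, hy⟩
    simp only [Prod.ext_iff] at hy
    omega
  · rcases a with _ | a
    · exact Or.inl ⟨b, rfl⟩
    · exact Or.inr ⟨(a, b), rfl⟩

lemma rpow_three_halves_mul_rpow_le {n m : ℝ} (hn : 0 ≤ n) (hm : 0 ≤ m) :
    n ^ (3 / 2 : ℝ) * m ^ (3 / 2 : ℝ) ≤ (n + m) * n * m := by
  have amgm : n ^ (1 / 2 : ℝ) * m ^ (1 / 2 : ℝ) ≤ n + m := by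
    have := Real.geom_mean_le_arith_mean2_weighted (w₁ := 1 / 2) (w₂ := 1 / 2) (by norm_num)
      (by norm_num) hn hm (by norm_num)
    linarith
  have split (x : ℝ) (hx : 0 ≤ x) : x ^ (3 / 2 : ℝ) = x ^ (1 / 2 : ℝ) * x := by
    rw [← Real.rpow_add_one' hx (by norm_num)]
    norm_num
  rw [split n hn, split m hm]
  calc n ^ (1 / 2 : ℝ) * n * (m ^ (1 / 2 : ℝ) * m)
      = n ^ (1 / 2 : ℝ) * m ^ (1 / 2 : ℝ) * (n * m) := by ring
    _ ≤ (n + m) * (n * m) := by gcongr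
    _ = (n + m) * n * m := by ring

lemma add_mul_le_pow_mul_pow {n m : ℝ} (hn : 1 ≤ n) (hm : 0 ≤ m) {a b : ℕ} (ha : 1 ≤ a)
    (hab : 2 ≤ a + b) : (n + m) * n ≤ (n + m) ^ a * n ^ b := by
  obtain ⟨a, rfl⟩ := Nat.exists_eq_add_of_le' ha
  calc (n + m) * n ≤ (n + m) * n ^ (a + b) := by gcongr; exact le_self_pow₀ hn (by omega)
    _ ≤ (n + m) * ((n + m) ^ a * n ^ b) := by rw [pow_add]; gcongr; linarith
    _ = (n + m) ^ (a + 1) * n ^ b := by ring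

lemma summable_inv_add_one_rpow_three_halves :
    Summable (fun n : ℕ => (((n : ℝ) + 1) ^ (3 / 2 : ℝ))⁻¹) := by
  simpa [abs_of_nonneg, add_nonneg] using
    (Real.summable_one_div_nat_add_rpow 1 (3 / 2)).2 (by norm_num)

lemma hasSum_rz {j : ℕ} (hj : 2 ≤ j) : HasSum (fun n : ℕ => 1 / ((n : ℝ) + 1) ^ j) (rz j) := by
  refine Summable.hasSum ?_
  simpa using (summable_nat_add_iff 1).2 (Real.summable_one_div_nat_pow.2 (by omega))

noncomputable def tornheimTerm (r q p : ℕ) (x : ℕ × ℕ) : ℝ :=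
  1 / (((x.1 : ℝ) + (x.2 : ℝ) + 2) ^ r * ((x.1 : ℝ) + 1) ^ q * ((x.2 : ℝ) + 1) ^ p)

lemma T_eq_tsum (r q p : ℕ) : T r q p = ∑' x, tornheimTerm r q p x := rfl

lemma dz_eq_T (q p : ℕ) : dz q p = T q 0 p := by
  simp [dz, T]

lemma tornheimTerm_swap (r q p : ℕ) (x : ℕ × ℕ) :
    tornheimTerm r q p x.swap = tornheimTerm r p q x := by
  simp only [tornheimTerm, Prod.fst_swap, Prod.snd_swap]
  ring_nf

lemma T_comm (r q p : ℕ) : T r q p = T r p q := by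
  simp only [T_eq_tsum, ← tornheimTerm_swap r p q]
  exact (Equiv.prodComm ℕ ℕ).tsum_eq (tornheimTerm r p q)

lemma tornheimTerm_le {a b c : ℕ} (ha : 1 ≤ a) (hab : 2 ≤ a + b) (hc : 1 ≤ c) (x : ℕ × ℕ) :
    tornheimTerm a b c x ≤ (((x.1 : ℝ) + 1) ^ (3 / 2 : ℝ))⁻¹ * (((x.2 : ℝ) + 1) ^ (3 / 2 : ℝ))⁻¹ := by
  rw [tornheimTerm, one_div, ← mul_inv, show (x.1 : ℝ) + x.2 + 2 = (x.1 + 1) + (x.2 + 1) by ring]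
  set n : ℝ := x.1 + 1
  set m : ℝ := x.2 + 1
  have hn : 1 ≤ n := by simp [n]
  have hm : 1 ≤ m := by simp [m]
  refine inv_anti₀ (by positivity) ?_
  calc n ^ (3 / 2 : ℝ) * m ^ (3 / 2 : ℝ) ≤ (n + m) * n * m :=
        rpow_three_halves_mul_rpow_le (by linarith) (by linarith)
    _ ≤ (n + m) ^ a * n ^ b * m ^ c :=
        mul_le_mul (add_mul_le_pow_mul_pow hn (by linarith) ha hab) (le_self_pow₀ hm (by omega))
          (by linarith) (by positivity)

lemma summable_tornheimTerm {a b c : ℕ} (ha : 1 ≤ a) (hab : 2 ≤ a + b) (hc : 1 ≤ c) :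
    Summable (tornheimTerm a b c) :=
  .of_nonneg_of_le (fun x => by unfold tornheimTerm; positivity) (tornheimTerm_le ha hab hc)
    (summable_inv_add_one_rpow_three_halves.mul_of_nonneg summable_inv_add_one_rpow_three_halves
      (fun _ => by positivity) (fun _ => by positivity))

lemma summable_tornheimTerm' {a b c : ℕ} (ha : 1 ≤ a) (hac : 2 ≤ a + c) (hb : 1 ≤ b) :
    Summable (tornheimTerm a b c) := by
  simpa only [comp_def, Equiv.prodComm_apply, tornheimTerm_swap] using
    (Equiv.prodComm ℕ ℕ).summable_iff.2 (summable_tornheimTerm ha hac hb)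

lemma hasSum_dz {q p : ℕ} (hq : 2 ≤ q) (hp : 1 ≤ p) : HasSum (tornheimTerm q 0 p) (dz q p) := by
  rw [dz_eq_T]
  exact (summable_tornheimTerm (by omega) (by omega) hp).hasSum

lemma T_succ_succ {r : ℕ} (hr : 1 ≤ r) (q p : ℕ) :
    T r (q + 1) (p + 1) = T (r + 1) q (p + 1) + T (r + 1) (q + 1) p := by
  simp only [T_eq_tsum]
  rw [← (summable_tornheimTerm (by omega) (by omega) (by omega)).tsum_add
    (summable_tornheimTerm' (by omega) (by omega) (by omega))]
  refine tsum_congr fun x => ?_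
  have : (0 : ℝ) < x.1 + 1 := by positivity
  have : (0 : ℝ) < x.2 + 1 := by positivity
  simp only [tornheimTerm]
  field_simp
  ring

lemma T_one_eq_sum_dz_add_dz {r : ℕ} (hr : 1 ≤ r) (p : ℕ) :
    T r 1 p = ∑ i ∈ range p, dz (r + 1 + i) (p - i) + dz (r + p) 1 := by
  induction p generalizing r with
  | zero => simp [T_comm r 1 0, dz_eq_T]
  | succ p ih =>
    rw [T_succ_succ hr, ih (by omega), sum_range_succ', dz_eq_T (r + 1)]
    simp only [Nat.add_sub_add_right, Nat.sub_zero]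
    ring_nf

/-- The summand of the double zeta-star value `ζ⋆(q,p) = ∑_{n ≥ m ≥ 1} 1/(n^q m^p)`, at
`n = x.1 + x.2 + 1` and `m = x.2 + 1`. -/
noncomputable def zetaStarTerm (q p : ℕ) (x : ℕ × ℕ) : ℝ :=
  1 / (((x.1 : ℝ) + x.2 + 1) ^ q * ((x.2 : ℝ) + 1) ^ p)

lemma hasSum_zetaStarTerm {q p : ℕ} (hq : 2 ≤ q) (hp : 1 ≤ p) :
    HasSum (zetaStarTerm q p) (rz (q + p) + dz q p) := by
  refine HasSum.add_of_isCompl_range (fun m n h => by simpa using h)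
    (fun x y h => by simpa [Prod.ext_iff] using h) isCompl_range_zero_range_succ ?_ ?_
  · refine (hasSum_rz (j := q + p) (by omega)).congr_fun fun n => ?_
    simp [zetaStarTerm, pow_add]
  · refine (hasSum_dz hq hp).congr_fun fun x => ?_
    simp only [comp_apply, zetaStarTerm, tornheimTerm]
    push_cast
    ring_nf

lemma hasSum_tornheimTerm_one_fiber (p a : ℕ) :
    HasSum (fun b => tornheimTerm 1 p 1 (a, b))
      (∑ y ∈ antidiagonal a, zetaStarTerm (p + 1) 1 y) := by
  have hterm (b : ℕ) : tornheimTerm 1 p 1 (a, b) = 1 / ((a : ℝ) + 1) ^ (p + 1) *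
      (1 / ((b : ℝ) + 1) - 1 / ((b : ℝ) + (a + 1 : ℕ) + 1)) := by
    simp only [tornheimTerm]
    push_cast
    field_simp
    ring
  have hfiber : ∑ y ∈ antidiagonal a, zetaStarTerm (p + 1) 1 y
      = 1 / ((a : ℝ) + 1) ^ (p + 1) * ∑ i ∈ range (a + 1), 1 / ((i : ℝ) + 1) := by
    rw [Nat.antidiagonal_eq_map', sum_map, mul_sum]
    refine sum_congr rfl fun i hi => ?_
    have : ((a - i : ℕ) : ℝ) + i = a := by
      rw [Nat.cast_sub (by simpa [Nat.lt_succ_iff] using hi)]; ring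
    show zetaStarTerm (p + 1) 1 (a - i, i) = _
    simp only [zetaStarTerm, this, pow_one, one_div_mul_one_div]
  simpa only [hterm, hfiber] using (hasSum_one_div_add_one_sub (a + 1)).mul_left _

lemma T_one_eq_rz_add_dz {p : ℕ} (hp : 1 ≤ p) : T 1 p 1 = rz (p + 2) + dz (p + 1) 1 :=
  ((summable_tornheimTerm le_rfl (by omega) le_rfl).hasSum.prod_fiberwise
    (hasSum_tornheimTerm_one_fiber p)).unique
    (hasSum_zetaStarTerm (by omega) le_rfl).sum_antidiagonal

lemma sum_range_dz {p : ℕ} (hp : 1 ≤ p) : ∑ i ∈ range p, dz (i + 2) (p - i) = rz (p + 2) := by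
  have h := T_one_eq_sum_dz_add_dz le_rfl p
  rw [T_comm, T_one_eq_rz_add_dz hp, add_comm 1 p] at h
  simp only [add_comm 2] at h ⊢
  linarith

lemma sum_Icc_dz {k : ℕ} (hk : 3 ≤ k) : ∑ j ∈ Icc 2 (k - 1), dz j (k - j) = rz k := by
  obtain ⟨p, rfl⟩ : ∃ p, k = p + 2 := ⟨k - 2, by omega⟩
  rw [← sum_range_dz (p := p) (by omega), show p + 2 - 1 = p + 1 by omega,
    ← Ico_add_one_right_eq_Icc, sum_Ico_eq_sum_range, show p + 1 + 1 - 2 = p by omega]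
  refine sum_congr rfl fun i _ => ?_
  rw [add_comm 2 i, Nat.add_sub_add_right]

lemma rz_mul_rz {a b : ℕ} (ha : 2 ≤ a) (hb : 2 ≤ b) :
    rz a * rz b = dz a b + dz b a + rz (a + b) := by
  have hprod := (hasSum_rz ha).mul (hasSum_rz hb)
    ((hasSum_rz ha).summable.mul_of_nonneg (hasSum_rz hb).summable
      (fun _ => by positivity) (fun _ => by positivity))
  refine hprod.unique ?_
  rw [show dz a b + dz b a + rz (a + b) = rz (a + b) + dz a b + dz b a by ring]
  refine HasSum.add_of_isCompl_range (fun x y h => by simp only [Prod.ext_iff] at h ⊢; omega)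
    (fun x y h => by simp only [Prod.ext_iff] at h ⊢; omega) isCompl_range_ge_range_lt ?_ ?_
  · refine (hasSum_zetaStarTerm ha (by omega : 1 ≤ b)).congr_fun fun x => ?_
    simp only [comp_apply, zetaStarTerm]
    push_cast
    rw [one_div_mul_one_div]
  · refine (hasSum_dz hb (by omega : 1 ≤ a)).congr_fun fun x => ?_
    simp only [comp_apply, tornheimTerm]
    push_cast
    ring_nf

theorem euler_formula (k : ℕ) (hk : 3 ≤ k) :
    2 * dz (k - 1) 1 = ((k : ℝ) - 1) * rz k - ∑ j ∈ Finset.Icc 2 (k - 2), rz j * rz (k - j) := by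
  obtain ⟨m, rfl⟩ : ∃ m, k = m + 3 := ⟨k - 3, by omega⟩
  have hsum := sum_Icc_dz (k := m + 3) (by omega)
  rw [show m + 3 - 1 = m + 1 + 1 by omega, sum_Icc_succ_top (by omega),
    show m + 3 - (m + 1 + 1) = 1 by omega] at hsum
  have hstuffle : ∀ j ∈ Icc 2 (m + 1),
      rz j * rz (m + 3 - j) = dz j (m + 3 - j) + dz (m + 3 - j) j + rz (m + 3) := by
    intro j hj
    rw [mem_Icc] at hj
    rw [rz_mul_rz hj.1 (by omega), Nat.add_sub_cancel' (by omega)]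
  have hreflect : ∑ j ∈ Icc 2 (m + 1), dz (m + 3 - j) j = ∑ j ∈ Icc 2 (m + 1), dz j (m + 3 - j) :=
    sum_nbij' (m + 3 - ·) (m + 3 - ·) (fun j hj => by simp only [mem_Icc] at hj ⊢; omega)
      (fun j hj => by simp only [mem_Icc] at hj ⊢; omega)
      (fun j hj => by simp only [mem_Icc] at hj; omega)
      (fun j hj => by simp only [mem_Icc] at hj; omega)
      fun j hj => by rw [Nat.sub_sub_self (by simp only [mem_Icc] at hj; omega)]
  rw [show m + 3 - 2 = m + 1 by omega, show m + 3 - 1 = m + 2 by omega, sum_congr rfl hstuffle,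
    sum_add_distrib, sum_add_distrib, hreflect, sum_const, Nat.card_Icc, nsmul_eq_mul]
  push_cast
  linarith
end

section
/- If k is a multiple of 3 with k ≥ 6, then the Mordell value T(k/3, k/3, k/3) is a rational multiple of ζ(k). -/
/-!
For `j ≥ 1`, the Fourier series `g(x) = ∑_{n ≥ 1} cos (2πnx) / n^{2j}` equals `C · B_{2j}(x)` on
`[0, 1]`, where `B_{2j}` is the Bernoulli polynomial and `C ∈ ℚ · π^{2j}`. Expanding `g³` and
integrating over `[0, 1]`, the triple `(m, n, l)` of frequencies contributes `1/4` exactly when one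
of them is the sum of the other two, so `∫₀¹ g³ = (3/4) T(2j, 2j, 2j)`. The left side is
`C³ ∫₀¹ B_{2j}³ ∈ ℚ · π^{6j}`, and by Euler `ζ(6j)` is a nonzero rational multiple of `π^{6j}`.
-/

open Real Set Function
open scoped Nat

theorem hasSum_cube_of_summable_norm {ι R : Type*} [NormedRing R] [CompleteSpace R] {f : ι → R}
    (hf : Summable fun i => ‖f i‖) :
    HasSum (fun p : (ι × ι) × ι => f p.1.1 * f p.1.2 * f p.2) ((∑' i, f i) ^ 3) := by
  have h2 := hf.mul_norm hf
  rw [pow_three', tsum_mul_tsum_of_summable_norm hf hf,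
    tsum_mul_tsum_of_summable_norm (by simpa only using h2) hf]
  exact (h2.mul_norm hf).of_norm.hasSum

theorem integral_cos_two_pi_int_mul (z : ℤ) :
    ∫ x in (0 : ℝ)..1, cos (2 * π * z * x) = if z = 0 then 1 else 0 := by
  split_ifs with hz
  · simp [hz]
  · have hz' : 2 * π * z ≠ 0 := by simp [hz, pi_ne_zero]
    have hsin : sin (2 * π * z) = 0 := by
      simpa [mul_comm, mul_assoc, mul_left_comm] using sin_int_mul_pi (2 * z)
    simp [intervalIntegral.integral_comp_mul_left (fun y => cos y) hz', hsin]

theorem integral_cos_mul_cos_mul_cos (m n l : ℕ) :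
    ∫ x in (0 : ℝ)..1, cos (2 * π * m * x) * cos (2 * π * n * x) * cos (2 * π * l * x) =
      ((if m + n + l = 0 then 1 else 0) + (if m + n = l then 1 else 0) +
        (if n = m + l then 1 else 0) + (if m = n + l then 1 else 0)) / 4 := by
  have hprod (x : ℝ) : cos (2 * π * m * x) * cos (2 * π * n * x) * cos (2 * π * l * x) =
      (cos (2 * π * ((m + n + l : ℤ) : ℝ) * x) + cos (2 * π * ((m + n - l : ℤ) : ℝ) * x) +
        cos (2 * π * ((m - n + l : ℤ) : ℝ) * x) + cos (2 * π * ((m - n - l : ℤ) : ℝ) * x)) / 4 := by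
    push_cast
    simp only [mul_add, mul_sub, add_mul, sub_mul, cos_add, cos_sub, sin_add, sin_sub]
    ring
  have hint (z : ℤ) : IntervalIntegrable (fun x => cos (2 * π * z * x)) MeasureTheory.volume 0 1 :=
    (continuous_cos.comp (continuous_const.mul continuous_id)).intervalIntegrable 0 1
  simp only [hprod, intervalIntegral.integral_div]
  rw [intervalIntegral.integral_add (((hint _).add (hint _)).add (hint _)) (hint _),
    intervalIntegral.integral_add ((hint _).add (hint _)) (hint _),
    intervalIntegral.integral_add (hint _) (hint _)]
  simp only [integral_cos_two_pi_int_mul]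
  simp only [show ((m : ℤ) + n + l = 0 ↔ m + n + l = 0) by omega,
    show ((m : ℤ) + n - l = 0 ↔ m + n = l) by omega,
    show ((m : ℤ) - n + l = 0 ↔ n = m + l) by omega,
    show ((m : ℤ) - n - l = 0 ↔ m = n + l) by omega]

theorem hasSum_integral_cosine_series_cube {c : ℕ → ℝ} (hc : Summable fun n => ‖c n‖) :
    HasSum (fun p : (ℕ × ℕ) × ℕ => ∫ x in (0 : ℝ)..1, c p.1.1 * cos (2 * π * p.1.1 * x) *
        (c p.1.2 * cos (2 * π * p.1.2 * x)) * (c p.2 * cos (2 * π * p.2 * x)))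
      (∫ x in (0 : ℝ)..1, (∑' n : ℕ, c n * cos (2 * π * n * x)) ^ 3) := by
  have hterm_le (n : ℕ) (x : ℝ) : ‖c n * cos (2 * π * n * x)‖ ≤ ‖c n‖ := by
    rw [norm_mul]
    exact mul_le_of_le_one_right (norm_nonneg _) (abs_cos_le_one _)
  have hbound : Summable fun p : (ℕ × ℕ) × ℕ => ‖c p.1.1‖ * ‖c p.1.2‖ * ‖c p.2‖ := by
    simpa only [norm_mul] using (hc.mul_norm hc).mul_norm hc
  refine intervalIntegral.hasSum_integral_of_dominated_convergence
    (fun p _ => ‖c p.1.1‖ * ‖c p.1.2‖ * ‖c p.2‖)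
    (fun p => by fun_prop) (fun p => MeasureTheory.ae_of_all _ fun x _ => ?_)
    (MeasureTheory.ae_of_all _ fun _ _ => hbound) intervalIntegrable_const
    (MeasureTheory.ae_of_all _ fun x _ => hasSum_cube_of_summable_norm
      (.of_nonneg_of_le (fun _ => norm_nonneg _) (hterm_le · x) hc))
  rw [norm_mul, norm_mul]
  gcongr <;> apply hterm_le

theorem integral_cosine_triple_product {c : ℕ → ℝ} (hc0 : c 0 = 0) (m n l : ℕ) :
    ∫ x in (0 : ℝ)..1, c m * cos (2 * π * m * x) * (c n * cos (2 * π * n * x)) *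
        (c l * cos (2 * π * l * x)) =
      ((if m + n = l then c m * c n * c l else 0) + (if n = m + l then c m * c n * c l else 0) +
        (if m = n + l then c m * c n * c l else 0)) / 4 := by
  have hfactor (x : ℝ) : c m * cos (2 * π * m * x) * (c n * cos (2 * π * n * x)) *
      (c l * cos (2 * π * l * x)) =
      c m * c n * c l * (cos (2 * π * m * x) * cos (2 * π * n * x) * cos (2 * π * l * x)) := by
    ring
  rw [intervalIntegral.integral_congr fun x _ => hfactor x, intervalIntegral.integral_const_mul,
    integral_cos_mul_cos_mul_cos]
  by_cases h0 : m + n + l = 0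
  · obtain rfl : m = 0 := by omega
    simp [hc0]
  · rw [if_neg h0]
    split_ifs <;> ring

theorem hasSum_ite_iff_of_injective {β γ M : Type*} [AddCommMonoid M] [TopologicalSpace M]
    {e : γ → β} (he : Injective e) {P : β → Prop} [DecidablePred P]
    (hP : ∀ b, P b ↔ b ∈ range e) {f : β → M} {a : M} :
    HasSum (fun b => if P b then f b else 0) a ↔ HasSum (f ∘ e) a := by
  have hcomp : (fun b => if P b then f b else 0) ∘ e = f ∘ e :=
    funext fun c => if_pos ((hP _).mpr ⟨c, rfl⟩)
  rw [← he.hasSum_iff fun b hb => if_neg (mt (hP b).mp hb), hcomp]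

theorem hasSum_ite_additive_triples {c : ℕ → ℝ} {S : ℝ}
    (hS : HasSum (fun q : ℕ × ℕ => c q.1 * c q.2 * c (q.1 + q.2)) S) :
    HasSum (fun p : (ℕ × ℕ) × ℕ =>
      (if p.1.1 + p.1.2 = p.2 then c p.1.1 * c p.1.2 * c p.2 else 0) +
        (if p.1.2 = p.1.1 + p.2 then c p.1.1 * c p.1.2 * c p.2 else 0) +
        (if p.1.1 = p.1.2 + p.2 then c p.1.1 * c p.1.2 * c p.2 else 0)) (S + S + S) := by
  have h₁ : HasSum (fun p : (ℕ × ℕ) × ℕ =>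
      if p.1.1 + p.1.2 = p.2 then c p.1.1 * c p.1.2 * c p.2 else 0) S :=
    (hasSum_ite_iff_of_injective (e := fun q : ℕ × ℕ => ((q.1, q.2), q.1 + q.2))
      (fun q q' h => by simp_all [Prod.ext_iff])
      (fun p => ⟨fun h => ⟨p.1, Prod.ext rfl h⟩, by rintro ⟨q, rfl⟩; rfl⟩)).mpr hS
  have h₂ : HasSum (fun p : (ℕ × ℕ) × ℕ =>
      if p.1.2 = p.1.1 + p.2 then c p.1.1 * c p.1.2 * c p.2 else 0) S :=
    (hasSum_ite_iff_of_injective (e := fun q : ℕ × ℕ => ((q.1, q.1 + q.2), q.2))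
      (fun q q' h => by simp_all [Prod.ext_iff])
      (fun p => ⟨fun h => ⟨(p.1.1, p.2), Prod.ext (Prod.ext rfl h.symm) rfl⟩,
        by rintro ⟨q, rfl⟩; rfl⟩)).mpr
      (hS.congr_fun fun q => by simp only [comp_apply]; ring)
  have h₃ : HasSum (fun p : (ℕ × ℕ) × ℕ =>
      if p.1.1 = p.1.2 + p.2 then c p.1.1 * c p.1.2 * c p.2 else 0) S :=
    (hasSum_ite_iff_of_injective (e := fun q : ℕ × ℕ => ((q.1 + q.2, q.1), q.2))
      (fun q q' h => by simp_all [Prod.ext_iff])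
      (fun p => ⟨fun h => ⟨(p.1.2, p.2), Prod.ext (Prod.ext h.symm rfl) rfl⟩,
        by rintro ⟨q, rfl⟩; rfl⟩)).mpr
      (hS.congr_fun fun q => by simp only [comp_apply]; ring)
  exact (h₁.add h₂).add h₃

theorem integral_cosine_series_cube {c : ℕ → ℝ} (hc : Summable fun n => ‖c n‖) (hc0 : c 0 = 0) :
    ∫ x in (0 : ℝ)..1, (∑' n : ℕ, c n * cos (2 * π * n * x)) ^ 3 =
      3 / 4 * ∑' q : ℕ × ℕ, c q.1 * c q.2 * c (q.1 + q.2) := by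
  have hsummable : Summable fun q : ℕ × ℕ => c q.1 * c q.2 * c (q.1 + q.2) :=
    ((hc.mul_norm hc).mul_norm hc).of_norm.comp_injective
      (i := fun q : ℕ × ℕ => ((q.1, q.2), q.1 + q.2)) fun q q' h => by simp_all [Prod.ext_iff]
  have h := (hasSum_integral_cosine_series_cube hc).unique
    (((hasSum_ite_additive_triples hsummable.hasSum).div_const 4).congr_fun
      fun p => integral_cosine_triple_product hc0 p.1.1 p.1.2 p.2)
  linarith

theorem exists_rat_integral_eval_map (P : Polynomial ℚ) :
    ∃ q : ℚ, ∫ x in (0 : ℝ)..1, (P.map (algebraMap ℚ ℝ)).eval x = q := by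
  induction P using Polynomial.induction_on' with
  | add P Q hP hQ =>
    obtain ⟨p, hp⟩ := hP
    obtain ⟨q, hq⟩ := hQ
    refine ⟨p + q, ?_⟩
    simp only [Polynomial.map_add, Polynomial.eval_add]
    rw [intervalIntegral.integral_add ((Polynomial.continuous _).intervalIntegrable _ _)
      ((Polynomial.continuous _).intervalIntegrable _ _), hp, hq, Rat.cast_add]
  | monomial n a =>
    refine ⟨a / (n + 1), ?_⟩
    simp [integral_pow, div_eq_mul_inv]

theorem T_self_eq_tsum {a : ℕ} (ha : a ≠ 0) :
    T a a a = ∑' q : ℕ × ℕ,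
      1 / (q.1 : ℝ) ^ a * (1 / (q.2 : ℝ) ^ a) * (1 / ((q.1 + q.2 : ℕ) : ℝ) ^ a) := by
  have hsupp : support (fun q : ℕ × ℕ =>
      1 / (q.1 : ℝ) ^ a * (1 / (q.2 : ℝ) ^ a) * (1 / ((q.1 + q.2 : ℕ) : ℝ) ^ a)) ⊆
      range fun q : ℕ × ℕ => (q.1 + 1, q.2 + 1) := by
    rintro ⟨m, n⟩ hmn
    have hm : m ≠ 0 := by rintro rfl; simp [ha] at hmn
    have hn : n ≠ 0 := by rintro rfl; simp [ha] at hmn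
    exact ⟨(m - 1, n - 1), Prod.ext (Nat.sub_add_cancel (by omega)) (Nat.sub_add_cancel (by omega))⟩
  have hinj : Injective fun q : ℕ × ℕ => (q.1 + 1, q.2 + 1) := fun q q' h => by
    simp_all [Prod.ext_iff]
  rw [T, ← hinj.tsum_eq hsupp]
  congr 1 with q
  push_cast
  field_simp
  ring

theorem exists_rat_T_eq_mul_pi_pow {j : ℕ} (hj : j ≠ 0) :
    ∃ r : ℚ, T (2 * j) (2 * j) (2 * j) = r * π ^ (6 * j) := by
  set C : ℝ := (-1) ^ (j + 1) * (2 * π) ^ (2 * j) / 2 / (2 * j)!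
  obtain ⟨q, hq⟩ := exists_rat_integral_eval_map (Polynomial.bernoulli (2 * j) ^ 3)
  have hcube := integral_cosine_series_cube (c := fun n : ℕ => 1 / (n : ℝ) ^ (2 * j))
    (by simpa [Real.norm_eq_abs] using (summable_one_div_nat_pow.mpr (by omega : 1 < 2 * j)).abs)
    (by simp [hj])
  have hseries : ∫ x in (0 : ℝ)..1, (∑' n : ℕ, 1 / (n : ℝ) ^ (2 * j) * cos (2 * π * n * x)) ^ 3 =
      C ^ 3 * q := by
    rw [← hq, ← intervalIntegral.integral_const_mul]
    refine intervalIntegral.integral_congr fun x hx => ?_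
    rw [uIcc_of_le zero_le_one] at hx
    simp only [(hasSum_one_div_nat_pow_mul_cos hj hx).tsum_eq, Polynomial.map_pow,
      Polynomial.eval_pow]
    ring
  refine ⟨4 / 3 * ((-1) ^ (j + 1) * 2 ^ (2 * j) / 2 / (2 * j)!) ^ 3 * q, ?_⟩
  rw [T_self_eq_tsum (by omega)]
  have hsum : ∑' q : ℕ × ℕ, 1 / (q.1 : ℝ) ^ (2 * j) * (1 / (q.2 : ℝ) ^ (2 * j)) *
      (1 / ((q.1 + q.2 : ℕ) : ℝ) ^ (2 * j)) = 4 / 3 * (C ^ 3 * q) := by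
    rw [← hseries, hcube]
    ring
  rw [hsum]
  push_cast
  ring

theorem rz_two_mul_pos_and_exists_rat {N : ℕ} (hN : N ≠ 0) :
    0 < rz (2 * N) ∧ ∃ s : ℚ, rz (2 * N) = s * π ^ (2 * N) := by
  have hsum : HasSum (fun n : ℕ => 1 / ((n : ℝ) + 1) ^ (2 * N))
      ((-1) ^ (N + 1) * 2 ^ (2 * N - 1) * π ^ (2 * N) * bernoulli (2 * N) / (2 * N)!) := by
    simpa [hN] using (hasSum_nat_add_iff (f := fun n : ℕ => 1 / (n : ℝ) ^ (2 * N)) 1).mpr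
      (by simpa [hN] using hasSum_zeta_nat hN)
  refine ⟨hsum.summable.tsum_pos (fun n => by positivity) 0 (by positivity),
    (-1) ^ (N + 1) * 2 ^ (2 * N - 1) * bernoulli (2 * N) / (2 * N)!, ?_⟩
  rw [rz, hsum.tsum_eq]
  push_cast
  ring

theorem mordell_value (k : ℕ) (hk : Even k) (h3 : 3 ∣ k) (h6 : 6 ≤ k) :
    ∃ c : ℚ, T (k / 3) (k / 3) (k / 3) = (c : ℝ) * rz k := by
  obtain ⟨j, rfl⟩ : 6 ∣ k :=
    Nat.Coprime.mul_dvd_of_dvd_of_dvd (by norm_num) (even_iff_two_dvd.mp hk) h3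
  have hj : j ≠ 0 := by omega
  obtain ⟨r, hr⟩ := exists_rat_T_eq_mul_pi_pow hj
  obtain ⟨hpos, s, hs⟩ := rz_two_mul_pos_and_exists_rat (N := 3 * j) (by omega)
  rw [← mul_assoc, show 2 * 3 = 6 from rfl] at hpos hs
  have hs0 : (s : ℝ) ≠ 0 := by rintro h; simp [h] at hs; linarith
  refine ⟨r / s, ?_⟩
  rw [show 6 * j / 3 = 2 * j by omega, hr, hs]
  push_cast
  field_simp
end

section
/- For even k ≥ 4, the sum of all odd-indexed double zeta values of weight k satisfies Σ_{j odd, 3 ≤ j ≤ k-1} ζ(j, k-j) = (1/4)·ζ(k). -/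
/-!
Write `k = 2J + 2` and parametrise the pairs `n > m ≥ 1` by `m` and the gap `d = n - m`.
Summing geometric progressions in `j`, the whole weight-`k` sum `∑_{j=2}^{k-1} n^{-j} m^{j-k}`
equals `1/(m^{k-2} d n) - 1/(n^{k-1} d)`, and its even part equals
`1/(m^{k-2} d (n+m)) - 1/(n^{k-2} d (n+m))`. In both differences the first term is summed
column by column (fixed `m`, a telescoping sum in `d` giving harmonic numbers) and the second
row by row (fixed `n`, a finite sum of harmonic numbers). Pairing the column of `m` with the row
of `n = m`, the harmonic numbers cancel up to `H_s - H_{s-1} = 1/s`, which gives Euler's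
`∑_j ζ(j, k-j) = ζ(k)` and `∑_{j even} ζ(j, k-j) = 3/4 ζ(k)`; the odd part is their difference.
-/

open Finset Filter Topology

lemma harmonic_cast_eq_sum (n : ℕ) : (harmonic n : ℝ) = ∑ i ∈ range n, 1 / ((i : ℝ) + 1) := by
  simp [harmonic]

lemma harmonic_cast_succ (n : ℕ) : (harmonic (n + 1) : ℝ) = harmonic n + 1 / ((n : ℝ) + 1) := by
  simp [harmonic_succ]

lemma sum_range_one_div_eq_harmonic_sub (n s : ℕ) :
    ∑ j ∈ range s, 1 / ((n : ℝ) + j + 1) = harmonic (n + s) - harmonic n := by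
  simp only [harmonic_cast_eq_sum, sum_range_add, Nat.cast_add, add_sub_cancel_left]

theorem Antitone.hasSum_sub_comp_add {g : ℕ → ℝ} (hg : Antitone g)
    (hlim : Tendsto g atTop (𝓝 0)) (k : ℕ) :
    HasSum (fun n => g n - g (n + k)) (∑ i ∈ range k, g i) := by
  rw [hasSum_iff_tendsto_nat_of_nonneg (fun n => sub_nonneg.2 (hg (Nat.le_add_right n k)))]
  have hpartial : ∀ N, ∑ n ∈ range N, (g n - g (n + k))
      = ∑ i ∈ range k, g i - ∑ i ∈ range k, g (N + i) := by
    intro N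
    have h := sum_range_add g N k
    rw [add_comm N k, sum_range_add] at h
    simp only [sum_sub_distrib, add_comm _ k] at h ⊢
    linarith
  have htail : Tendsto (fun N => ∑ i ∈ range k, g (N + i)) atTop (𝓝 0) := by
    simpa using tendsto_finsetSum (range k) fun i _ => hlim.comp (tendsto_add_atTop_nat i)
  simpa only [hpartial, sub_zero] using tendsto_const_nhds.sub htail

lemma hasSum_one_div_sub_one_div_add (k : ℕ) :
    HasSum (fun n : ℕ => 1 / ((n : ℝ) + 1) - 1 / ((n : ℝ) + k + 1)) (harmonic k) := by
  have hanti : Antitone fun n : ℕ => 1 / ((n : ℝ) + 1) := fun a b hab =>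
    one_div_le_one_div_of_le (by positivity) (by gcongr)
  simpa [harmonic_cast_eq_sum, add_right_comm] using
    hanti.hasSum_sub_comp_add tendsto_one_div_add_atTop_nhds_zero_nat k

lemma hasSum_one_div_mul_add (k : ℕ) (hk : k ≠ 0) :
    HasSum (fun a : ℕ => 1 / (((a : ℝ) + 1) * ((a : ℝ) + 1 + k))) (harmonic k / k) := by
  have hk' : (k : ℝ) ≠ 0 := by exact_mod_cast hk
  have hterm : (fun a : ℕ => 1 / (((a : ℝ) + 1) * ((a : ℝ) + 1 + k)))
      = fun a : ℕ => (1 / ((a : ℝ) + 1) - 1 / ((a : ℝ) + k + 1)) / k := by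
    funext a
    field_simp
    ring
  rw [hterm]
  exact (hasSum_one_div_sub_one_div_add k).div_const _

lemma sum_antidiagonal_one_div_fst (r : ℕ) :
    ∑ x ∈ antidiagonal r, 1 / ((x.1 : ℝ) + 1) = harmonic (r + 1) := by
  rw [Nat.sum_antidiagonal_eq_sum_range_succ_mk, harmonic_cast_eq_sum]

lemma sum_antidiagonal_one_div_add_snd (s r : ℕ) :
    ∑ x ∈ antidiagonal r, 1 / ((s : ℝ) + x.2 + 1) = harmonic (s + (r + 1)) - harmonic s := by
  rw [← sum_range_one_div_eq_harmonic_sub, ← Nat.sum_antidiagonal_swap]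
  simp only [Prod.snd_swap]
  exact Nat.sum_antidiagonal_eq_sum_range_succ_mk (fun x => 1 / ((s : ℝ) + x.1 + 1)) r

theorem HasSum.antidiagonal_fiberwise {A α : Type*} [AddMonoid A] [HasAntidiagonal A]
    [AddCommMonoid α] [TopologicalSpace α] [ContinuousAdd α] [RegularSpace α]
    {f : A × A → α} {a : α} (h : HasSum f a) :
    HasSum (fun n => ∑ x ∈ antidiagonal n, f x) a :=
  (HasAntidiagonal.sigmaAntidiagonalEquivProd.hasSum_iff.mpr h).sigma fun n =>
    (antidiagonal n).hasSum f

theorem hasSum_sub_of_columns_of_rows {α : Type*} [AddCommGroup α] [TopologicalSpace α]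
    [IsTopologicalAddGroup α] [RegularSpace α] {P Q : ℕ × ℕ → α} {s t : α} {p q : ℕ → α}
    (hP : HasSum P s) (hQ : HasSum Q t) (hp : ∀ b, HasSum (fun a => P (a, b)) (p b))
    (hq : ∀ r, ∑ x ∈ antidiagonal r, Q x = q (r + 1)) (hq0 : q 0 = 0) :
    HasSum (fun b => p b - q b) (s - t) := by
  have hcols : HasSum p s := ((Equiv.prodComm ℕ ℕ).hasSum_iff.mpr hP).prod_fiberwise hp
  have hrows : HasSum q t :=
    (hasSum_nat_add_iff' 1).mp (by simpa [hq0, hq] using hQ.antidiagonal_fiberwise)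
  exact hcols.sub hrows

lemma sum_range_pow_succ_mul_pow_mul_sub {R : Type*} [CommRing R] (u v : R) (c : ℕ) :
    (∑ i ∈ range c, u ^ (i + 1) * v ^ (c - i)) * (u - v) = u * v * (u ^ c - v ^ c) := by
  rw [← geom_sum₂_mul, ← mul_assoc, mul_sum]
  congr 1
  refine sum_congr rfl fun i hi => ?_
  rw [show c - i = c - 1 - i + 1 by have := mem_range.1 hi; omega]
  ring

lemma sum_Icc_one_div_pow_mul_pow {d m : ℝ} (hd : 0 < d) (hm : 0 < m) (c : ℕ) :
    ∑ j ∈ Icc 2 (c + 1), 1 / ((d + m) ^ j * m ^ (c + 2 - j))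
      = 1 / (m ^ c * d * (d + m)) - 1 / ((d + m) ^ (c + 1) * d) := by
  set u := 1 / (d + m)
  set v := 1 / m
  have hreindex : ∑ j ∈ Icc 2 (c + 1), 1 / ((d + m) ^ j * m ^ (c + 2 - j))
      = u * ∑ i ∈ range c, u ^ (i + 1) * v ^ (c - i) := by
    rw [← Ico_add_one_right_eq_Icc, sum_Ico_eq_sum_range, mul_sum]
    refine sum_congr (by congr 1) fun i hi => ?_
    rw [show c + 2 - (2 + i) = c - i by omega]
    simp only [u, v, div_pow, one_pow]
    field_simp
    ring
  have huv : u - v ≠ 0 := sub_ne_zero.2 (one_div_lt_one_div_of_lt hm (by linarith)).ne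
  rw [hreindex]
  refine mul_right_cancel₀ huv ?_
  rw [mul_assoc, sum_range_pow_succ_mul_pow_mul_sub]
  have hd0 := hd.ne'
  have hdm : d + m ≠ 0 := by positivity
  simp only [u, v, div_pow, one_pow]
  field_simp
  ring

lemma sum_even_one_div_pow_mul_pow {d m : ℝ} (hd : 0 < d) (hm : 0 < m) (J : ℕ) :
    ∑ j ∈ (Icc 2 (2 * J + 1)).filter Even, 1 / ((d + m) ^ j * m ^ (2 * J + 2 - j))
      = 1 / (m ^ (2 * J) * d * (d + 2 * m)) - 1 / ((d + m) ^ (2 * J) * d * (d + 2 * m)) := by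
  set u := 1 / (d + m) ^ 2
  set v := 1 / m ^ 2
  have hevens : (Icc 2 (2 * J + 1)).filter Even = (range J).image fun i => 2 * i + 2 := by
    ext j
    simp only [mem_filter, mem_Icc, mem_image, mem_range, Nat.even_iff]
    constructor
    · rintro ⟨hj, hj2⟩
      exact ⟨j / 2 - 1, by omega, by omega⟩
    · rintro ⟨i, hi, rfl⟩
      omega
  have hreindex : ∑ j ∈ (Icc 2 (2 * J + 1)).filter Even, 1 / ((d + m) ^ j * m ^ (2 * J + 2 - j))
      = ∑ i ∈ range J, u ^ (i + 1) * v ^ (J - i) := by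
    rw [hevens, sum_image fun a _ b _ h => by omega]
    refine sum_congr rfl fun i hi => ?_
    rw [show 2 * J + 2 - (2 * i + 2) = 2 * (J - i) by omega]
    simp only [u, v, div_pow, one_pow, ← pow_mul]
    field_simp
    ring
  have huv : u - v ≠ 0 :=
    sub_ne_zero.2 (one_div_lt_one_div_of_lt (by positivity) (by gcongr; linarith)).ne
  rw [hreindex]
  refine mul_right_cancel₀ huv ?_
  rw [sum_range_pow_succ_mul_pow_mul_sub]
  have hd0 := hd.ne'
  have hdm : d + m ≠ 0 := by positivity
  have hd2m : d + 2 * m ≠ 0 := by positivity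
  simp only [u, v, div_pow, one_pow, ← pow_mul]
  field_simp
  ring

/-- `gapFamily f (a, b) = f d m` with `d = a + 1`, `m = b + 1`: a pair `n > m ≥ 1` of a double
zeta sum is encoded by its smaller entry `m` and its gap `d = n - m`. -/
def gapFamily (f : ℝ → ℝ → ℝ) (x : ℕ × ℕ) : ℝ := f ((x.1 : ℝ) + 1) ((x.2 : ℝ) + 1)

lemma dz_eq_tsum_gapFamily (q p : ℕ) :
    dz q p = ∑' x, gapFamily (fun d m => 1 / ((d + m) ^ q * m ^ p)) x :=
  tsum_congr fun x => by simp only [gapFamily]; ring_nf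

lemma summable_gapFamily_one_div {D : ℝ → ℝ → ℝ}
    (hD : ∀ d m : ℝ, 1 ≤ d → 1 ≤ m → d ^ 2 * m ^ 2 ≤ D d m) :
    Summable (gapFamily fun d m => 1 / D d m) := by
  have hsq : Summable fun n : ℕ => 1 / ((n : ℝ) + 1) ^ 2 := by
    simpa using (summable_nat_add_iff 1).2 (Real.summable_one_div_nat_pow.2 one_lt_two)
  refine Summable.of_nonneg_of_le (fun x => ?_) (fun x => ?_)
    (hsq.mul_of_nonneg hsq (fun n => by positivity) (fun n => by positivity))
  all_goals
    have hd : (1 : ℝ) ≤ x.1 + 1 := by linarith [(x.1.cast_nonneg : (0 : ℝ) ≤ x.1)]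
    have hm : (1 : ℝ) ≤ x.2 + 1 := by linarith [(x.2.cast_nonneg : (0 : ℝ) ≤ x.2)]
    have hpos : 0 < ((x.1 : ℝ) + 1) ^ 2 * ((x.2 : ℝ) + 1) ^ 2 := by positivity
  · exact one_div_nonneg.2 (hpos.le.trans (hD _ _ hd hm))
  · rw [one_div_mul_one_div]
    exact one_div_le_one_div_of_le hpos (hD _ _ hd hm)

lemma summable_dz_summand {q p : ℕ} (hq : 2 ≤ q) (hqp : 4 ≤ q + p) :
    Summable (gapFamily fun d m => 1 / ((d + m) ^ q * m ^ p)) :=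
  summable_gapFamily_one_div fun d m hd hm => calc
    d ^ 2 * m ^ 2 ≤ (d + m) ^ 2 * m ^ (q - 2 + p) := by
      gcongr
      · linarith
      · omega
    _ = (d + m) ^ 2 * m ^ (q - 2) * m ^ p := by rw [pow_add]; ring
    _ ≤ (d + m) ^ 2 * (d + m) ^ (q - 2) * m ^ p := by gcongr; linarith
    _ = (d + m) ^ q * m ^ p := by rw [← pow_add, Nat.add_sub_cancel' hq]

lemma hasSum_gapFamily_column (c : ℕ) {s : ℕ} (hs : s ≠ 0) (b : ℕ) :
    HasSum (fun a => gapFamily (fun d m => 1 / (m ^ c * d * (d + s * m))) (a, b))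
      (harmonic (s * (b + 1)) / (s * ((b : ℝ) + 1) ^ (c + 1))) := by
  have hb : (b : ℝ) + 1 ≠ 0 := by positivity
  have hs' : (s : ℝ) ≠ 0 := by exact_mod_cast hs
  have h := (hasSum_one_div_mul_add (s * (b + 1)) (by positivity)).mul_left
    (1 / ((b : ℝ) + 1) ^ c)
  rw [show (harmonic (s * (b + 1)) : ℝ) / (s * ((b : ℝ) + 1) ^ (c + 1))
      = 1 / ((b : ℝ) + 1) ^ c * (harmonic (s * (b + 1)) / ((s * (b + 1) : ℕ) : ℝ)) by
    push_cast; field_simp; ring]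
  refine h.congr_fun fun a => ?_
  simp only [gapFamily]
  push_cast
  field_simp

lemma gap_add_eq_of_mem_antidiagonal {r : ℕ} {x : ℕ × ℕ} (hx : x ∈ antidiagonal r) :
    (x.1 : ℝ) + 1 + ((x.2 : ℝ) + 1) = (r : ℝ) + 2 := by
  rw [HasAntidiagonal.mem_antidiagonal] at hx
  rw [← hx]
  push_cast
  ring

lemma sum_antidiagonal_gapFamily_pow (c r : ℕ) :
    ∑ x ∈ antidiagonal r, gapFamily (fun d m => 1 / ((d + m) ^ c * d)) x
      = harmonic (r + 1) / ((r : ℝ) + 2) ^ c := by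
  rw [div_eq_mul_one_div, mul_comm, ← sum_antidiagonal_one_div_fst, mul_sum]
  refine sum_congr rfl fun x hx => ?_
  simp only [gapFamily, gap_add_eq_of_mem_antidiagonal hx]
  field_simp

lemma sum_antidiagonal_gapFamily_pow_mul_add (c r : ℕ) :
    ∑ x ∈ antidiagonal r, gapFamily (fun d m => 1 / ((d + m) ^ c * d * (d + 2 * m))) x
      = (harmonic (r + 1) + harmonic (2 * r + 3) - harmonic (r + 2))
        / (2 * ((r : ℝ) + 2) ^ (c + 1)) := by
  -- partial fractions: with `n = d + m = r + 2`, `1 / (d (n + m)) = (1 / d + 1 / (n + m)) / (2 n)`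
  rw [add_sub_assoc, show 2 * r + 3 = r + 2 + (r + 1) by ring, ← sum_antidiagonal_one_div_fst,
    ← sum_antidiagonal_one_div_add_snd, ← sum_add_distrib, div_eq_mul_one_div, mul_comm, mul_sum]
  refine sum_congr rfl fun x hx => ?_
  have hn := gap_add_eq_of_mem_antidiagonal hx
  simp only [gapFamily, hn]
  push_cast
  rw [show (r : ℝ) = x.1 + x.2 by linarith]
  field_simp
  ring

theorem sum_dz_eq_rz {c : ℕ} (hc : 2 ≤ c) :
    ∑ j ∈ Icc 2 (c + 1), dz j (c + 2 - j) = rz (c + 2) := by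
  set P := gapFamily fun d m => 1 / (m ^ c * d * (d + m))
  set Q := gapFamily fun d m => 1 / ((d + m) ^ (c + 1) * d)
  have hP : Summable P := summable_gapFamily_one_div fun d m hd hm => calc
    d ^ 2 * m ^ 2 = m ^ 2 * d * d := by ring
    _ ≤ m ^ c * d * (d + m) := by gcongr; linarith
  have hQ : Summable Q := summable_gapFamily_one_div fun d m hd hm => calc
    d ^ 2 * m ^ 2 = d * m * m * d := by ring
    _ ≤ (d + m) * (d + m) * (d + m) * d := by gcongr <;> linarith
    _ = (d + m) ^ 3 * d := by ring
    _ ≤ (d + m) ^ (c + 1) * d := by gcongr <;> linarith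
  have hsplit : ∑ j ∈ Icc 2 (c + 1), dz j (c + 2 - j) = ∑' x, (P x - Q x) := by
    simp only [dz_eq_tsum_gapFamily]
    rw [← Summable.tsum_finsetSum fun j hj => summable_dz_summand (mem_Icc.1 hj).1 (by omega)]
    exact tsum_congr fun x => sum_Icc_one_div_pow_mul_pow (by positivity) (by positivity) c
  have hdiff := hasSum_sub_of_columns_of_rows
    (p := fun b => harmonic (b + 1) / ((b : ℝ) + 1) ^ (c + 1))
    (q := fun b => harmonic b / ((b : ℝ) + 1) ^ (c + 1)) hP.hasSum hQ.hasSum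
    (fun b => by simpa only [Nat.cast_one, one_mul] using hasSum_gapFamily_column c one_ne_zero b)
    (fun r => by rw [sum_antidiagonal_gapFamily_pow]; push_cast; ring_nf) (by simp)
  rw [hsplit, hP.tsum_sub hQ, ← hdiff.tsum_eq, rz]
  refine tsum_congr fun b => ?_
  rw [harmonic_cast_succ]
  field_simp
  ring

theorem sum_even_dz_eq {J : ℕ} (hJ : 1 ≤ J) :
    ∑ j ∈ (Icc 2 (2 * J + 1)).filter Even, dz j (2 * J + 2 - j) = 3 / 4 * rz (2 * J + 2) := by
  set P := gapFamily fun d m => 1 / (m ^ (2 * J) * d * (d + 2 * m))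
  set Q := gapFamily fun d m => 1 / ((d + m) ^ (2 * J) * d * (d + 2 * m))
  have hP : Summable P := summable_gapFamily_one_div fun d m hd hm => calc
    d ^ 2 * m ^ 2 = m ^ 2 * d * d := by ring
    _ ≤ m ^ (2 * J) * d * (d + 2 * m) := by gcongr <;> linarith
  have hQ : Summable Q := summable_gapFamily_one_div fun d m hd hm => calc
    d ^ 2 * m ^ 2 = m ^ 2 * d * d := by ring
    _ ≤ (d + m) ^ 2 * d * (d + 2 * m) := by gcongr <;> linarith
    _ ≤ (d + m) ^ (2 * J) * d * (d + 2 * m) := by gcongr <;> linarith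
  have hsplit : ∑ j ∈ (Icc 2 (2 * J + 1)).filter Even, dz j (2 * J + 2 - j)
      = ∑' x, (P x - Q x) := by
    simp only [dz_eq_tsum_gapFamily]
    rw [← Summable.tsum_finsetSum fun j hj =>
      summable_dz_summand (mem_Icc.1 (mem_filter.1 hj).1).1 (by omega)]
    exact tsum_congr fun x => sum_even_one_div_pow_mul_pow (by positivity) (by positivity) J
  have hdiff := hasSum_sub_of_columns_of_rows
    (p := fun b => harmonic (2 * (b + 1)) / (2 * ((b : ℝ) + 1) ^ (2 * J + 1)))
    (q := fun b => (harmonic b + harmonic (2 * b + 1) - harmonic (b + 1))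
      / (2 * ((b : ℝ) + 1) ^ (2 * J + 1))) hP.hasSum hQ.hasSum
    (fun b => by
      simpa only [Nat.cast_ofNat] using hasSum_gapFamily_column (2 * J) two_ne_zero b)
    (fun r => by rw [sum_antidiagonal_gapFamily_pow_mul_add]; push_cast; ring_nf) (by simp)
  rw [hsplit, hP.tsum_sub hQ, ← hdiff.tsum_eq, rz, ← tsum_mul_left]
  refine tsum_congr fun b => ?_
  rw [show 2 * (b + 1) = 2 * b + 1 + 1 by ring, harmonic_cast_succ, harmonic_cast_succ b]
  push_cast
  field_simp
  ring

theorem gkz_sum_formula (k : ℕ) (hk : Even k) (hk4 : 4 ≤ k) :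
    ∑ j ∈ (Finset.Icc 3 (k - 1)).filter (fun j => Odd j), dz j (k - j)
      = (1 / 4) * rz k := by
  obtain ⟨J, hJ, rfl⟩ : ∃ J, 1 ≤ J ∧ k = 2 * J + 2 := by
    obtain ⟨r, rfl⟩ := hk
    exact ⟨r - 1, by omega, by omega⟩
  have hodd : (Icc 3 (2 * J + 2 - 1)).filter (fun j => Odd j)
      = (Icc 2 (2 * J + 1)).filter fun j => ¬Even j := by
    ext j
    simp only [mem_filter, mem_Icc, Nat.not_even_iff_odd, Nat.odd_iff]
    omega
  have htotal := sum_filter_add_sum_filter_not (Icc 2 (2 * J + 1)) Even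
    fun j => dz j (2 * J + 2 - j)
  rw [sum_dz_eq_rz (by omega), sum_even_dz_eq hJ] at htotal
  rw [hodd]
  linarith
end
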